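/- In the graph Z_{α,β} augmented by adding at most α new vertices and at most β new edges, fully occupied by n = 1 + (2β+1)(α+1) robots, consider an arm P (path of α+1 vertices) that is not incident to any added edge. If a robot initially located at the leaf end of P ever reaches the center vertex, then at that moment all α+1 vertices of P are unoccupied, which is impossible since the augmented graph has at most n + α vertices and n robots, so at most α vertices are ever vacant. Hence the robot at the leaf of such an arm can never reach the center. -/

import Mathlib

/-- The vertex set of the graph `Z_{α,β}`: a center vertex together with `2β+1`
disjoint arms (paths), each with `α+1` vertices. -/
abbrev ZVert (α β : ℕ) : Type := Unit ⊕ (Fin (2 * β + 1) × Fin (α + 1))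

/-- The graph `Z_{α,β}`: the center is joined to the first vertex of each arm, and
consecutive vertices along each arm are adjacent. -/
def ZGraph (α β : ℕ) : SimpleGraph (ZVert α β) :=
  SimpleGraph.fromRel (fun u v =>
    (∃ j : Fin (2 * β + 1), u = Sum.inl () ∧ v = Sum.inr (j, ⟨0, Nat.succ_pos α⟩)) ∨
    (∃ (j : Fin (2 * β + 1)) (i : ℕ) (h : i + 1 < α + 1),
      u = Sum.inr (j, ⟨i, Nat.lt_of_succ_lt h⟩) ∧ v = Sum.inr (j, ⟨i + 1, h⟩)))

/-- A simple path move: robots slide synchronously one step along a simple path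
whose last vertex is unoccupied; all other robots stay put. -/
def IsPathMove {V ι : Type*} (G : SimpleGraph V) (S S' : ι → V) : Prop :=
  ∃ l : List V, 2 ≤ l.length ∧ l.Nodup ∧ l.Chain' G.Adj ∧
    (∀ (hne : l ≠ []) (i : ι), S i ≠ l.getLast hne) ∧
    (∀ i, S i ∉ l → S' i = S i) ∧
    (∀ (i : ι) (k : ℕ) (hk : k + 1 < l.length),
      S i = l.get ⟨k, by omega⟩ → S' i = l.get ⟨k + 1, hk⟩)

/-- A simple rotation move: robots on a fully occupied simple cycle advance
synchronously one step along the cycle; all other robots stay put. -/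
def IsRotation {V ι : Type*} (G : SimpleGraph V) (S S' : ι → V) : Prop :=
  ∃ l : List V, 3 ≤ l.length ∧ l.Nodup ∧ l.Chain' G.Adj ∧
    (∀ hne : l ≠ [], G.Adj (l.getLast hne) (l.head hne)) ∧
    (∀ v ∈ l, ∃ i, S i = v) ∧
    (∀ i, S i ∉ l → S' i = S i) ∧
    (∀ (i : ι) (k : ℕ) (hk : k < l.length), S i = l.get ⟨k, hk⟩ →
      S' i = l.get ⟨(k + 1) % l.length, Nat.mod_lt _ (by omega)⟩)

/-!
Both kinds of moves act on the vertices by a permutation (`List.formPerm` of the path or of the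
cycle) that sends every occupied vertex to itself or to a neighbour and never exchanges two
robots. Along an arm that meets no added edge a robot can only enter an arm vertex from an
adjacent one, so no robot ever gets past the robot that started at the leaf: it stays the
outermost robot of its arm. If it reached the center, all `α + 1` vertices of the arm would be
vacant, but an injective placement of the robots leaves only `a ≤ α` vertices vacant.
-/

open Function

section RobotMoves

variable {V ι : Type*} {G : SimpleGraph V} {A B : ι → V}

structure IsLocalPerm (G : SimpleGraph V) (A : ι → V) (π : Equiv.Perm V) : Prop where
  eq_or_adj : ∀ r, π (A r) = A r ∨ G.Adj (A r) (π (A r))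
  no_swap : ∀ r s, π (A r) = A s → π (A s) = A r → π (A r) = A r

lemma isLocalPerm_one (G : SimpleGraph V) (A : ι → V) : IsLocalPerm G A 1 :=
  ⟨fun _ => Or.inl rfl, fun _ _ _ _ => rfl⟩

variable [DecidableEq V]

lemma isLocalPerm_formPerm_of_isChain {l : List V} (hnd : l.Nodup) (hch : l.IsChain G.Adj)
    (hocc : ∀ r, A r ∈ l → ∃ k, ∃ hk : k + 1 < l.length, A r = l[k]) :
    IsLocalPerm G A l.formPerm := by
  have hshift : ∀ k (hk : k + 1 < l.length), l.formPerm l[k] = l[k + 1] := fun k hk => by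
    rw [List.formPerm_apply_getElem _ hnd]; simp only [Nat.mod_eq_of_lt hk]
  refine ⟨fun r => ?_, fun r s hrs hsr => ?_⟩
  · by_cases hr : A r ∈ l
    · obtain ⟨k, hk, hrk⟩ := hocc r hr
      rw [hrk, hshift k hk]
      exact Or.inr (hch.getElem k hk)
    · exact Or.inl (List.formPerm_apply_of_notMem hr)
  · by_cases hr : A r ∈ l
    · obtain ⟨k, hk, hrk⟩ := hocc r hr
      obtain ⟨k', hk', hsk⟩ := hocc s (hrs ▸ List.formPerm_apply_mem_of_mem hr)
      rw [hrk, hshift k hk, hsk, hnd.getElem_inj_iff] at hrs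
      rw [hsk, hshift k' hk', hrk, hnd.getElem_inj_iff] at hsr
      omega
    · exact List.formPerm_apply_of_notMem hr

lemma IsPathMove.exists_isLocalPerm (h : IsPathMove G A B) :
    ∃ π, IsLocalPerm G A π ∧ B = π ∘ A := by
  obtain ⟨l, hlen, hnd, hch, hlast, hstay, hmove⟩ := h
  -- the last vertex of `l` is vacant, so the wrap-around of `formPerm` moves no robot
  have hocc : ∀ r, A r ∈ l → ∃ k, ∃ hk : k + 1 < l.length, A r = l[k] := by
    intro r hr
    obtain ⟨k, hk, hrk⟩ := List.getElem_of_mem hr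
    refine ⟨k, ?_, hrk.symm⟩
    by_contra hlt
    exact hlast (List.ne_nil_of_mem hr) r (by rw [List.getLast_eq_getElem]; grind)
  refine ⟨l.formPerm, isLocalPerm_formPerm_of_isChain hnd hch hocc, funext fun r => ?_⟩
  by_cases hr : A r ∈ l
  · obtain ⟨k, hk, hrk⟩ := hocc r hr
    rw [comp_apply, hrk, List.formPerm_apply_getElem _ hnd]
    simp only [Nat.mod_eq_of_lt hk]
    exact hmove r k hk hrk
  · rw [comp_apply, List.formPerm_apply_of_notMem hr, hstay r hr]

lemma isLocalPerm_formPerm_of_isCycle {l : List V} (hlen : 3 ≤ l.length) (hnd : l.Nodup)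
    (hch : l.IsChain G.Adj) (hcyc : ∀ hne : l ≠ [], G.Adj (l.getLast hne) (l.head hne)) :
    IsLocalPerm G A l.formPerm := by
  refine ⟨fun r => ?_, fun r s hrs hsr => ?_⟩
  · by_cases hr : A r ∈ l
    · right
      obtain ⟨k, hk, hrk⟩ := List.getElem_of_mem hr
      rw [← hrk, List.formPerm_apply_getElem _ hnd]
      rcases Nat.lt_or_ge (k + 1) l.length with hk1 | hk1
      · simpa only [Nat.mod_eq_of_lt hk1] using hch.getElem k hk1
      · have hne := List.ne_nil_of_mem hr
        have := hcyc hne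
        rw [List.getLast_eq_getElem, List.head_eq_getElem] at this
        simpa only [show k = l.length - 1 by omega, Nat.sub_add_cancel (by omega : 1 ≤ l.length),
          Nat.mod_self] using this
    · exact Or.inl (List.formPerm_apply_of_notMem hr)
  · by_cases hr : A r ∈ l
    · exfalso
      obtain ⟨k, hk, hrk⟩ := List.getElem_of_mem hr
      have h2 : (l.formPerm ^ 2) l[k] = l[k] := by
        rw [sq, Equiv.Perm.mul_apply, hrk, hrs, hsr]
      rw [List.formPerm_pow_apply_getElem _ hnd, hnd.getElem_inj_iff] at h2
      rcases Nat.lt_or_ge (k + 2) l.length with hk2 | hk2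
      · rw [Nat.mod_eq_of_lt hk2] at h2; omega
      · rw [Nat.mod_eq_sub_mod hk2, Nat.mod_eq_of_lt (by omega)] at h2; omega
    · exact List.formPerm_apply_of_notMem hr

lemma IsRotation.exists_isLocalPerm (h : IsRotation G A B) :
    ∃ π, IsLocalPerm G A π ∧ B = π ∘ A := by
  obtain ⟨l, hlen, hnd, hch, hcyc, -, hstay, hmove⟩ := h
  refine ⟨l.formPerm, isLocalPerm_formPerm_of_isCycle hlen hnd hch hcyc, funext fun r => ?_⟩
  by_cases hr : A r ∈ l
  · obtain ⟨k, hk, hrk⟩ := List.getElem_of_mem hr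
    rw [comp_apply, ← hrk, List.formPerm_apply_getElem _ hnd]
    exact hmove r k hk hrk.symm
  · rw [comp_apply, List.formPerm_apply_of_notMem hr, hstay r hr]

lemma exists_isLocalPerm_of_move (h : A = B ∨ IsPathMove G A B ∨ IsRotation G A B) :
    ∃ π, IsLocalPerm G A π ∧ B = π ∘ A := by
  rcases h with rfl | h | h
  · exact ⟨1, isLocalPerm_one G A, rfl⟩
  · exact h.exists_isLocalPerm
  · exact h.exists_isLocalPerm

end RobotMoves

section PendantPath

variable {V ι : Type*} {G : SimpleGraph V} {m : ℕ} {u : Fin (m + 1) → V}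

def IsPendantPath (G : SimpleGraph V) (u : Fin (m + 1) → V) : Prop :=
  ∀ i, i ≠ 0 → ∀ w, G.Adj (u i) w → ∃ i', w = u i' ∧ (i : ℕ) ≤ i' + 1 ∧ (i' : ℕ) ≤ i + 1

lemma IsPendantPath.exists_near_of_eq_or_adj (hpend : IsPendantPath G u) {i : Fin (m + 1)}
    (hi : i ≠ 0) {w : V} (h : w = u i ∨ G.Adj (u i) w) :
    ∃ i', w = u i' ∧ (i : ℕ) ≤ i' + 1 ∧ (i' : ℕ) ≤ i + 1 := by
  rcases h with rfl | h
  · exact ⟨i, rfl, by omega, by omega⟩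
  · exact hpend i hi w h

lemma IsPendantPath.comp_inl {W : Type*} {H : SimpleGraph (V ⊕ W)} (hpend : IsPendantPath G u)
    (hH : ∀ i, i ≠ 0 → ∀ w, H.Adj (Sum.inl (u i)) w → ∃ x, w = Sum.inl x ∧ G.Adj (u i) x) :
    IsPendantPath H (Sum.inl ∘ u) := by
  intro i hi w hw
  obtain ⟨x, rfl, hx⟩ := hH i hi w hw
  obtain ⟨i', rfl, h⟩ := hpend i hi x hx
  exact ⟨i', rfl, h⟩

def IsOutermostOn (u : Fin (m + 1) → V) (A : ι → V) (r₀ : ι) : Prop :=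
  ∃ i, A r₀ = u i ∧ ∀ r k, A r = u k → k ≠ 0 → (k : ℕ) ≤ i

lemma IsOutermostOn.comp_isLocalPerm (hpend : IsPendantPath G u) (hu : Injective u)
    {A : ι → V} {r₀ : ι} {π : Equiv.Perm V} (hA : Injective A) (hout : IsOutermostOn u A r₀)
    (h0 : A r₀ ≠ u 0) (hπ : IsLocalPerm G A π) :
    IsOutermostOn u (π ∘ A) r₀ := by
  obtain ⟨i, hi, hle⟩ := hout
  have hi0 : i ≠ 0 := by rintro rfl; exact h0 hi
  obtain ⟨i', hi', hii', hi'i⟩ := hpend.exists_near_of_eq_or_adj hi0 (hi ▸ hπ.eq_or_adj r₀)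
  refine ⟨i', by rw [comp_apply, hi, hi'], fun r k hk hk0 => ?_⟩
  rw [comp_apply] at hk
  obtain ⟨s, hs, hks, hsk⟩ :=
    hpend.exists_near_of_eq_or_adj hk0 ((hπ.eq_or_adj r).imp (·.symm.trans hk) (hk ▸ ·.symm))
  have hsi : (s : ℕ) ≤ i := by
    by_cases hs0 : s = 0
    · simp only [hs0, Fin.val_zero]; omega
    · exact hle r s hs hs0
  by_cases hsi' : s = i
  · obtain rfl : r = r₀ := hA (by rw [hs, hi, hsi'])
    rw [hu (hk.symm.trans (by rw [hi, hi']))]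
  · have hsi'' : (s : ℕ) < i := lt_of_le_of_ne hsi (fun h => hsi' (Fin.ext h))
    -- otherwise `r` enters `u i` from below while `r₀` leaves it downwards: a swap
    by_contra hki'
    have hki : (k : ℕ) = i := by omega
    have hswap := hπ.no_swap r₀ r (by rw [hi, hi', hs]; congr; ext; omega)
      (by rw [hk, hi]; congr; ext; exact hki)
    rw [hi, hi'] at hswap
    have := congrArg Fin.val (hu hswap)
    omega

lemma IsOutermostOn.eq_zero_of_apply_eq_zero (hu : Injective u) {A : ι → V} {r₀ : ι}
    (hout : IsOutermostOn u A r₀) (h0 : A r₀ = u 0) {r : ι} {k : Fin (m + 1)} (hk : A r = u k) :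
    k = 0 := by
  obtain ⟨i, hi, hle⟩ := hout
  obtain rfl : i = 0 := hu (hi.symm.trans h0)
  by_contra hk0
  exact hk0 (Fin.ext (Nat.le_zero.mp (hle r k hk hk0)))

end PendantPath

lemma card_add_card_le_of_injective {ι κ V : Type*} [Fintype ι] [Fintype κ] [Fintype V]
    {f : ι → V} {g : κ → V} (hf : Injective f) (hg : Injective g) (hfg : ∀ a b, f a ≠ g b) :
    Fintype.card ι + Fintype.card κ ≤ Fintype.card V := by
  simpa only [Fintype.card_sum] using Fintype.card_le_of_injective _ (hf.sumElim hg hfg)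

def armPath {α β : ℕ} (j : Fin (2 * β + 1)) : Fin (α + 2) → ZVert α β :=
  Fin.cons (Sum.inl ()) fun i => Sum.inr (j, i)

lemma armPath_injective {α β : ℕ} (j : Fin (2 * β + 1)) : Injective (armPath (α := α) j) :=
  Fin.cons_injective_iff.mpr ⟨by simp, fun _ _ h => by simpa using h⟩

lemma isPendantPath_armPath {α β : ℕ} (j : Fin (2 * β + 1)) :
    IsPendantPath (ZGraph α β) (armPath j) := by
  intro i hi x hx
  obtain ⟨i, rfl⟩ := Fin.exists_succ_eq.mpr hi
  simp only [armPath, Fin.cons_succ, ZGraph, SimpleGraph.fromRel_adj] at hx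
  simp only [ne_eq, reduceCtorEq, Fin.zero_eta, false_and, exists_const, Sum.inr.injEq,
    Prod.mk.injEq, Order.lt_add_one_iff, Order.add_one_le_iff, existsAndEq, true_and, false_or,
    exists_and_left] at hx
  obtain ⟨-, ⟨k, hk, rfl, rfl⟩ | ⟨rfl, rfl⟩ | ⟨k, hk, rfl, rfl⟩⟩ := hx
  · exact ⟨Fin.succ ⟨k + 1, by omega⟩, rfl, by simp, by simp⟩
  · exact ⟨0, rfl, by simp, by simp⟩
  · exact ⟨Fin.succ ⟨k, by omega⟩, rfl, by simp, by simp⟩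

lemma exists_apply_eq_arm {α β a : ℕ} (ha : a ≤ α) (j : Fin (2 * β + 1))
    {A : Fin (1 + (2 * β + 1) * (α + 1)) → ZVert α β ⊕ Fin a} (hA : Injective A) :
    ∃ r i, A r = Sum.inl (Sum.inr (j, i)) := by
  by_contra! hvac
  have := card_add_card_le_of_injective hA (f := A) (g := fun i => Sum.inl (Sum.inr (j, i)))
    (by intro i i' h; simpa using h) hvac
  simp only [Fintype.card_fin, Fintype.card_sum, Fintype.card_unique, Fintype.card_prod,
    add_le_add_iff_left, Order.add_one_le_iff] at this
  omega

theorem leaf_robot_never_reaches_center_general (α β a : ℕ) (ha : a ≤ α)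
    (H : SimpleGraph (ZVert α β ⊕ Fin a))
    (j : Fin (2 * β + 1))
    (harm : ∀ (i : Fin (α + 1)) (w : ZVert α β ⊕ Fin a),
      H.Adj (Sum.inl (Sum.inr (j, i))) w →
        ∃ u : ZVert α β, w = Sum.inl u ∧ (ZGraph α β).Adj (Sum.inr (j, i)) u)
    (S : Fin (1 + (2 * β + 1) * (α + 1)) → ZVert α β ⊕ Fin a)
    (hS : Function.Injective S)
    (r0 : Fin (1 + (2 * β + 1) * (α + 1)))
    (hr0 : S r0 = Sum.inl (Sum.inr (j, ⟨α, Nat.lt_succ_self α⟩)))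
    (T : Fin (1 + (2 * β + 1) * (α + 1)) → ZVert α β ⊕ Fin a)
    (hreach : Relation.ReflTransGen
      (fun A B => A = B ∨ IsPathMove H A B ∨ IsRotation H A B) S T) :
    T r0 ≠ Sum.inl (Sum.inl ()) := by
  set u : Fin (α + 2) → ZVert α β ⊕ Fin a := Sum.inl ∘ armPath j
  have hu : Injective u := Sum.inl_injective.comp (armPath_injective j)
  have hpend : IsPendantPath H u := (isPendantPath_armPath j).comp_inl fun i hi w hw => by
    obtain ⟨i, rfl⟩ := Fin.exists_succ_eq.mpr hi
    exact harm i w hw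
  have key : Injective T ∧ IsOutermostOn u T r0 ∧ T r0 ≠ u 0 := by
    induction hreach with
    | refl => exact ⟨hS, ⟨Fin.last _, hr0, fun _ k _ _ => k.le_last⟩, by simp [hr0, u, armPath]⟩
    | tail _ hstep ih =>
      obtain ⟨π, hπ, rfl⟩ := exists_isLocalPerm_of_move hstep
      obtain ⟨hinj, hout, h0⟩ := ih
      have hinj' := π.injective.comp hinj
      have hout' := hout.comp_isLocalPerm hpend hu hinj h0 hπ
      refine ⟨hinj', hout', fun h0' => ?_⟩
      obtain ⟨r, i, hi⟩ := exists_apply_eq_arm ha j hinj'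
      exact Fin.succ_ne_zero i (hout'.eq_zero_of_apply_eq_zero hu h0' hi)
  exact key.2.2

/-- In `Z_{α,β}` augmented with at most `α` added vertices and at most `β` added
edges, fully occupied by `n = 1 + (2β+1)(α+1)` robots, the robot starting at the
leaf of an arm incident to no added edge can never reach the center. -/
theorem leaf_robot_never_reaches_center (α β a : ℕ) (ha : a ≤ α)
    (H : SimpleGraph (ZVert α β ⊕ Fin a))
    (hZ : ∀ u v : ZVert α β, (ZGraph α β).Adj u v → H.Adj (Sum.inl u) (Sum.inl v))
    (hbudget :
      (H.edgeSet \ (Sym2.map Sum.inl '' (ZGraph α β).edgeSet)).ncard ≤ β)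
    (j : Fin (2 * β + 1))
    (harm : ∀ (i : Fin (α + 1)) (w : ZVert α β ⊕ Fin a),
      H.Adj (Sum.inl (Sum.inr (j, i))) w →
        ∃ u : ZVert α β, w = Sum.inl u ∧ (ZGraph α β).Adj (Sum.inr (j, i)) u)
    (S : Fin (1 + (2 * β + 1) * (α + 1)) → ZVert α β ⊕ Fin a)
    (hS : Function.Injective S)
    (r0 : Fin (1 + (2 * β + 1) * (α + 1)))
    (hr0 : S r0 = Sum.inl (Sum.inr (j, ⟨α, Nat.lt_succ_self α⟩)))
    (T : Fin (1 + (2 * β + 1) * (α + 1)) → ZVert α β ⊕ Fin a)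
    (hreach : Relation.ReflTransGen
      (fun A B => A = B ∨ IsPathMove H A B ∨ IsRotation H A B) S T) :
    T r0 ≠ Sum.inl (Sum.inl ()) :=
  leaf_robot_never_reaches_center_general α β a ha H j harm S hS r0 hr0 T hreach
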